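/- arXiv:2304.02141 — 6 statements merged into one kernel-verified Lean document; each statement's English description precedes it below -/
import Mathlib

section
/- Let N ≥ 1, let z_1,…,z_N be real numbers, and let Q_0 ≤ Q_1 be reals. If z_{n'} < 0 for some index n', then there exist a feasible unimodal sequence q that minimizes the linear loss L(q) = ∑_{n=1}^N z_n q_n over all feasible unimodal sequences, and an index n* with z_{n*} < 0 and q_{n*} = Q_1. -/
/-- `q` is feasible: each coordinate with index in `{1,…,N}` lies in `[Q0, Q1]`. -/
def Feasible (Q0 Q1 : ℝ) (N : ℕ) (q : ℕ → ℝ) : Prop :=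
  ∀ n, 1 ≤ n → n ≤ N → Q0 ≤ q n ∧ q n ≤ Q1

/-- `q` is nondecreasing on indices `{a,…,b}`. -/
def NondecOn (q : ℕ → ℝ) (a b : ℕ) : Prop :=
  ∀ i j, a ≤ i → i ≤ j → j ≤ b → q i ≤ q j

/-- `q` is nonincreasing on indices `{a,…,b}`. -/
def NonincOn (q : ℕ → ℝ) (a b : ℕ) : Prop :=
  ∀ i j, a ≤ i → i ≤ j → j ≤ b → q j ≤ q i

/-- `q` is unimodal on `{1,…,N}`. -/
def UnimodalOn (N : ℕ) (q : ℕ → ℝ) : Prop :=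
  ∃ p, 1 ≤ p ∧ p ≤ N ∧ NondecOn q 1 p ∧ NonincOn q p N

/-- Linear loss `∑_{n=1}^N z_n q_n`. -/
noncomputable def linLoss (z q : ℕ → ℝ) (N : ℕ) : ℝ :=
  ∑ n ∈ Finset.Icc 1 N, z n * q n

/-!
A minimiser is `Q0 + (Q1 - Q0) • 𝟙[a, b]` for an interval `[a, b] ⊆ [1, N]` of least `z`-sum
`m`. Indeed, after subtracting `Q0` a feasible unimodal `q` is a stack of interval indicators of
total height at most `Q1 - Q0`, each layer contributing at least its height times `m ≤ 0`. Since
`m ≤ z n' < 0`, the minimising interval contains some `n*` with `z n* < 0`, and there `q = Q1`.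
-/

open Finset

/-- Peak-free form of unimodality on `{a,…,b}` (superlevel sets are intervals), which passes
directly to subintervals. -/
def QuasiconcaveOnIcc (t : ℕ → ℝ) (a b : ℕ) : Prop :=
  ∀ i j k, a ≤ i → i ≤ j → j ≤ k → k ≤ b → min (t i) (t k) ≤ t j

section Quasiconcave

variable {t : ℕ → ℝ} {a b : ℕ}

theorem QuasiconcaveOnIcc.mono (h : QuasiconcaveOnIcc t a b) {a' b' : ℕ} (ha : a ≤ a')
    (hb : b' ≤ b) : QuasiconcaveOnIcc t a' b' :=
  fun i j k hi hij hjk hk => h i j k (ha.trans hi) hij hjk (hk.trans hb)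

theorem QuasiconcaveOnIcc.sub_const (h : QuasiconcaveOnIcc t a b) (s : ℝ) :
    QuasiconcaveOnIcc (fun n => t n - s) a b := by
  intro i j k hi hij hjk hk
  simpa only [min_sub_sub_right, sub_le_sub_iff_right] using h i j k hi hij hjk hk

theorem UnimodalOn.quasiconcaveOnIcc {N : ℕ} (h : UnimodalOn N t) : QuasiconcaveOnIcc t 1 N := by
  obtain ⟨p, -, -, hinc, hdec⟩ := h
  intro i j k hi hij hjk hk
  rcases le_total j p with hjp | hpj
  · exact (min_le_left _ _).trans (hinc i j hi hij hjp)
  · exact (min_le_right _ _).trans (hdec j k hpj hjk hk)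

theorem QuasiconcaveOnIcc.exists_erase_eq_Icc (hq : QuasiconcaveOnIcc t a b) (hab : a ≤ b) :
    ∃ e ∈ Icc a b, ∃ a' b', (Icc a b).erase e = Icc a' b' ∧ a ≤ a' ∧ b' ≤ b ∧
      b' + 1 - a' = b - a ∧ ∀ n ∈ Icc a b, t e ≤ t n := by
  have hends : ∀ n ∈ Icc a b, min (t a) (t b) ≤ t n := fun n hn =>
    hq a n b le_rfl (mem_Icc.1 hn).1 (mem_Icc.1 hn).2 le_rfl
  by_cases hend : t a ≤ t b
  · refine ⟨a, left_mem_Icc.2 hab, a + 1, b, by rw [Icc_erase_left, Icc_add_one_left_eq_Ioc],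
      by omega, le_rfl, by omega, fun n hn => ?_⟩
    simpa only [min_eq_left hend] using hends n hn
  · have hlt : a < b := hab.lt_of_ne (by rintro rfl; exact hend le_rfl)
    obtain ⟨b', rfl⟩ : ∃ b', b = b' + 1 := ⟨b - 1, by omega⟩
    refine ⟨b' + 1, right_mem_Icc.2 hab, a, b',
      by rw [Icc_erase_right, Ico_add_one_right_eq_Icc], le_rfl, by omega, by omega,
      fun n hn => ?_⟩
    simpa only [min_eq_right (le_of_not_ge hend)] using hends n hn

end Quasiconcave

theorem sum_mul_eq_mul_sum_add_sum_mul_sub (s : Finset ℕ) (z t : ℕ → ℝ) (c : ℝ) :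
    ∑ n ∈ s, z n * t n = c * ∑ n ∈ s, z n + ∑ n ∈ s, z n * (t n - c) := by
  rw [mul_sum, ← sum_add_distrib]
  exact sum_congr rfl fun n _ => by ring

/-- Peeling off an endpoint `e` where `t` is smallest splits `∑ z t` into
`t e * ∑ z ≥ t e * m` plus the same sum for `t - t e ∈ [0, c - t e]` on a shorter interval. -/
theorem mul_le_sum_mul_of_quasiconcaveOnIcc {z : ℕ → ℝ} {m : ℝ} (hm : m ≤ 0) {a b : ℕ}
    (hz : ∀ a' b', a ≤ a' → a' ≤ b' → b' ≤ b → m ≤ ∑ n ∈ Icc a' b', z n)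
    {t : ℕ → ℝ} {c : ℝ} (hc : 0 ≤ c) (ht : ∀ n ∈ Icc a b, 0 ≤ t n ∧ t n ≤ c)
    (hq : QuasiconcaveOnIcc t a b) : c * m ≤ ∑ n ∈ Icc a b, z n * t n := by
  induction hk : b + 1 - a generalizing a b t c with
  | zero =>
    rw [Icc_eq_empty (by omega), sum_empty]
    exact mul_nonpos_of_nonneg_of_nonpos hc hm
  | succ k ih =>
    have hab : a ≤ b := by omega
    obtain ⟨e, he, a', b', herase, ha', hb', hk', hmin⟩ := hq.exists_erase_eq_Icc hab
    obtain ⟨hte0, htec⟩ := ht e he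
    have hrest : (c - t e) * m ≤ ∑ n ∈ Icc a' b', z n * (t n - t e) := by
      refine ih (fun i j hi hij hj => hz i j (ha'.trans hi) hij (hj.trans hb')) (by linarith)
        (fun n hn => ?_) ((hq.mono ha' hb').sub_const _) (by omega)
      have hn' : n ∈ Icc a b := mem_of_mem_erase (herase ▸ hn)
      exact ⟨sub_nonneg.2 (hmin n hn'), by linarith [(ht n hn').2]⟩
    have hfull : t e * m ≤ t e * ∑ n ∈ Icc a b, z n :=
      mul_le_mul_of_nonneg_left (hz a b le_rfl hab le_rfl) hte0
    rw [sum_mul_eq_mul_sum_add_sum_mul_sub _ z t (t e),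
      ← sum_erase _ (f := fun n => z n * (t n - t e)) (a := e) (by simp), herase]
    linarith

theorem exists_Icc_sum_le (z : ℕ → ℝ) {lo hi : ℕ} (h : lo ≤ hi) :
    ∃ a b, lo ≤ a ∧ a ≤ b ∧ b ≤ hi ∧ ∀ a' b', lo ≤ a' → a' ≤ b' → b' ≤ hi →
      ∑ n ∈ Icc a b, z n ≤ ∑ n ∈ Icc a' b', z n := by
  obtain ⟨⟨a, b⟩, hab, hmin⟩ :=
    exists_min_image ((Icc lo hi ×ˢ Icc lo hi).filter fun p => p.1 ≤ p.2)
      (fun p => ∑ n ∈ Icc p.1 p.2, z n) ⟨(lo, lo), by simp [h]⟩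
  simp only [mem_filter, mem_product, mem_Icc] at hab
  refine ⟨a, b, hab.1.1.1, hab.2, hab.1.2.2, fun a' b' ha' hab' hb' => hmin (a', b') ?_⟩
  simp only [mem_filter, mem_product, mem_Icc]
  omega

theorem linLoss_ge_of_unimodalOn {z : ℕ → ℝ} {N : ℕ} {m : ℝ} (hm : m ≤ 0)
    (hz : ∀ a b, 1 ≤ a → a ≤ b → b ≤ N → m ≤ ∑ n ∈ Icc a b, z n) {Q0 Q1 : ℝ} (hQ : Q0 ≤ Q1)
    {q : ℕ → ℝ} (hf : Feasible Q0 Q1 N q) (hu : UnimodalOn N q) :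
    Q0 * ∑ n ∈ Icc 1 N, z n + (Q1 - Q0) * m ≤ linLoss z q N := by
  rw [linLoss, sum_mul_eq_mul_sum_add_sum_mul_sub _ z q Q0, add_le_add_iff_left]
  refine mul_le_sum_mul_of_quasiconcaveOnIcc hm hz (sub_nonneg.2 hQ) (fun n hn => ?_)
    (hu.quasiconcaveOnIcc.sub_const Q0)
  obtain ⟨h0, h1⟩ := hf n (mem_Icc.1 hn).1 (mem_Icc.1 hn).2
  exact ⟨sub_nonneg.2 h0, sub_le_sub_right h1 Q0⟩

def plateau (Q0 Q1 : ℝ) (a b n : ℕ) : ℝ :=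
  if n ∈ Icc a b then Q1 else Q0

section Plateau

variable {Q0 Q1 : ℝ} {a b : ℕ}

theorem feasible_plateau (hQ : Q0 ≤ Q1) (N : ℕ) : Feasible Q0 Q1 N (plateau Q0 Q1 a b) := by
  intro n _ _
  unfold plateau
  split_ifs
  exacts [⟨hQ, le_rfl⟩, ⟨le_rfl, hQ⟩]

theorem unimodalOn_plateau (hQ : Q0 ≤ Q1) {N : ℕ} (ha : 1 ≤ a) (hab : a ≤ b) (hb : b ≤ N) :
    UnimodalOn N (plateau Q0 Q1 a b) := by
  refine ⟨a, ha, hab.trans hb, fun i j _ hij hj => ?_, fun i j hi hij hj => ?_⟩ <;>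
  · simp only [plateau, mem_Icc]
    split_ifs <;> first | exact le_rfl | exact hQ | omega

theorem linLoss_plateau (z : ℕ → ℝ) {N : ℕ} (ha : 1 ≤ a) (hb : b ≤ N) :
    linLoss z (plateau Q0 Q1 a b) N
      = Q0 * ∑ n ∈ Icc 1 N, z n + (Q1 - Q0) * ∑ n ∈ Icc a b, z n := by
  have hsub : Icc 1 N ∩ Icc a b = Icc a b := inter_eq_right.2 (Icc_subset_Icc ha hb)
  have hterm (n : ℕ) :
      z n * (plateau Q0 Q1 a b n - Q0) = if n ∈ Icc a b then (Q1 - Q0) * z n else 0 := by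
    unfold plateau
    split_ifs <;> ring
  rw [linLoss, sum_mul_eq_mul_sum_add_sum_mul_sub _ z _ Q0, sum_congr rfl fun n _ => hterm n,
    sum_ite_mem, hsub, ← mul_sum]

end Plateau

theorem stmt1_general (N : ℕ) (z : ℕ → ℝ) (Q0 Q1 : ℝ) (hQ : Q0 ≤ Q1)
    (hz : ∃ n', 1 ≤ n' ∧ n' ≤ N ∧ z n' < 0) :
    ∃ q : ℕ → ℝ, Feasible Q0 Q1 N q ∧ UnimodalOn N q ∧
      (∀ q' : ℕ → ℝ, Feasible Q0 Q1 N q' → UnimodalOn N q' →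
        linLoss z q N ≤ linLoss z q' N) ∧
      ∃ nstar, 1 ≤ nstar ∧ nstar ≤ N ∧ z nstar < 0 ∧ q nstar = Q1 := by
  obtain ⟨n', hn1, hn2, hzn⟩ := hz
  obtain ⟨a, b, ha, hab, hb, hmin⟩ := exists_Icc_sum_le z (hn1.trans hn2)
  have hneg : ∑ n ∈ Icc a b, z n < 0 :=
    (hmin n' n' hn1 le_rfl hn2).trans_lt (by rwa [Icc_self, sum_singleton])
  obtain ⟨nstar, hnstar, hznstar⟩ := exists_lt_of_sum_lt (hneg.trans_eq sum_const_zero.symm)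
  refine ⟨plateau Q0 Q1 a b, feasible_plateau hQ N, unimodalOn_plateau hQ ha hab hb,
    fun q' hf hu => ?_, nstar, ha.trans (mem_Icc.1 hnstar).1, (mem_Icc.1 hnstar).2.trans hb,
    hznstar, if_pos hnstar⟩
  rw [linLoss_plateau z ha hb]
  exact linLoss_ge_of_unimodalOn hneg.le hmin hQ hf hu

/-- if some loss `z_{n'}` is negative, then there is a feasible unimodal
minimizer `q` of the linear loss and an index `n*` with `z_{n*} < 0` and `q_{n*} = Q1`. -/
theorem stmt1 (N : ℕ) (hN : 1 ≤ N) (z : ℕ → ℝ) (Q0 Q1 : ℝ) (hQ : Q0 ≤ Q1)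
    (hz : ∃ n', 1 ≤ n' ∧ n' ≤ N ∧ z n' < 0) :
    ∃ q : ℕ → ℝ, Feasible Q0 Q1 N q ∧ UnimodalOn N q ∧
      (∀ q' : ℕ → ℝ, Feasible Q0 Q1 N q' → UnimodalOn N q' →
        linLoss z q N ≤ linLoss z q' N) ∧
      ∃ nstar, 1 ≤ nstar ∧ nstar ≤ N ∧ z nstar < 0 ∧ q nstar = Q1 :=
  stmt1_general N z Q0 Q1 hQ hz
end

section
/- Let N ≥ 1, let z_1,…,z_N be real numbers, let Q_0 ≤ Q_1 be reals, and let q be a feasible unimodal sequence with peak index p (q nondecreasing on {1,…,p}, nonincreasing on {p,…,N}). Fix an index n with 1 < n < p. If z_n < 0, then the sequence q' obtained from q by setting q'_n = q_{n+1} (and q'_j = q_j for j ≠ n) is feasible, unimodal with the same peak p, and satisfies ∑_j z_j q'_j ≤ ∑_j z_j q_j. Likewise, if z_n > 0, then the sequence q'' obtained by setting q''_n = q_{n-1} is feasible, unimodal with peak p, and satisfies ∑_j z_j q''_j ≤ ∑_j z_j q_j. -/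
/-!
Replacing `q n` by the value of a neighbour on the ascending side keeps `q n` between its two
neighbours, so monotonicity on `{1,…,p}` survives, while the descending part is untouched.
The loss changes by `z n * (q' n - q n)`, and the neighbour is chosen so that this term is
nonpositive.
-/

open Finset Function

theorem linLoss_update (z q : ℕ → ℝ) {N n : ℕ} (v : ℝ) (hn : n ∈ Icc 1 N) :
    linLoss z (update q n v) N = linLoss z q N + z n * (v - q n) := by
  unfold linLoss
  calc ∑ m ∈ Icc 1 N, z m * update q n v m
      = ∑ m ∈ Icc 1 N, (z m * q m + if n = m then z n * (v - q n) else 0) := by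
        refine sum_congr rfl fun m _ => ?_
        rcases eq_or_ne n m with rfl | hm
        · simp only [update_self, if_true]
          ring
        · simp [update_of_ne (Ne.symm hm), hm]
    _ = ∑ m ∈ Icc 1 N, z m * q m + z n * (v - q n) := by
        rw [sum_add_distrib, sum_ite_eq, if_pos hn]

theorem Feasible.update {Q0 Q1 : ℝ} {N : ℕ} {q : ℕ → ℝ} (hq : Feasible Q0 Q1 N q) (n : ℕ)
    {v : ℝ} (hv : Q0 ≤ v ∧ v ≤ Q1) : Feasible Q0 Q1 N (update q n v) := by
  intro m hm1 hmN
  rcases eq_or_ne m n with rfl | hmn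
  · simpa using hv
  · simpa [update_of_ne hmn] using hq m hm1 hmN

theorem NonincOn.update_of_lt {q : ℕ → ℝ} {a b n : ℕ} (hq : NonincOn q a b) (hn : n < a)
    (v : ℝ) : NonincOn (update q n v) a b := by
  intro i j hai hij hjb
  rw [update_of_ne (by omega), update_of_ne (by omega)]
  exact hq i j hai hij hjb

namespace NondecOn

variable {q : ℕ → ℝ} {a b n : ℕ}

theorem update (hq : NondecOn q a b) {v : ℝ} (hlo : ∀ i, a ≤ i → i < n → q i ≤ v)
    (hhi : ∀ j, n < j → j ≤ b → v ≤ q j) : NondecOn (Function.update q n v) a b := by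
  intro i j hai hij hjb
  rcases eq_or_ne i n with rfl | hin <;> rcases eq_or_ne j i with rfl | hji
  · exact le_rfl
  · rw [update_self, update_of_ne hji]
    exact hhi j (by omega) hjb
  · exact le_rfl
  · rw [update_of_ne hin]
    rcases eq_or_ne j n with rfl | hjn
    · rw [update_self]
      exact hlo i hai (by omega)
    · rw [update_of_ne hjn]
      exact hq i j hai hij hjb

theorem update_succ (hq : NondecOn q a b) (ha : a ≤ n) (hb : n < b) :
    NondecOn (Function.update q n (q (n + 1))) a b :=
  hq.update (fun i hai hin => hq i (n + 1) hai (by omega) hb)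
    (fun j hnj hjb => hq (n + 1) j (by omega) hnj hjb)

theorem update_pred (hq : NondecOn q a b) (ha : a < n) (hb : n ≤ b) :
    NondecOn (Function.update q n (q (n - 1))) a b :=
  hq.update (fun i hai hin => hq i (n - 1) hai (by omega) (by omega))
    (fun j hnj hjb => hq (n - 1) j (by omega) (by omega) hjb)

end NondecOn

theorem stmt2_general (N p n : ℕ) (z q : ℕ → ℝ) (Q0 Q1 : ℝ)
    (hpN : p ≤ N)
    (hfeas : Feasible Q0 Q1 N q)
    (hup : NondecOn q 1 p) (hdown : NonincOn q p N)
    (h1n : 1 < n) (hnp : n < p) :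
    (z n < 0 →
      Feasible Q0 Q1 N (Function.update q n (q (n + 1))) ∧
      NondecOn (Function.update q n (q (n + 1))) 1 p ∧
      NonincOn (Function.update q n (q (n + 1))) p N ∧
      linLoss z (Function.update q n (q (n + 1))) N ≤ linLoss z q N) ∧
    (0 < z n →
      Feasible Q0 Q1 N (Function.update q n (q (n - 1))) ∧
      NondecOn (Function.update q n (q (n - 1))) 1 p ∧
      NonincOn (Function.update q n (q (n - 1))) p N ∧
      linLoss z (Function.update q n (q (n - 1))) N ≤ linLoss z q N) := by
  have hn : n ∈ Icc 1 N := mem_Icc.2 ⟨h1n.le, by omega⟩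
  have hq_succ : q n ≤ q (n + 1) := hup n (n + 1) h1n.le (by omega) hnp
  have hq_pred : q (n - 1) ≤ q n := hup (n - 1) n (by omega) (by omega) hnp.le
  refine ⟨fun hz => ⟨hfeas.update n (hfeas (n + 1) (by omega) (by omega)),
      hup.update_succ h1n.le hnp, hdown.update_of_lt hnp _, ?_⟩,
    fun hz => ⟨hfeas.update n (hfeas (n - 1) (by omega) (by omega)),
      hup.update_pred h1n hnp.le, hdown.update_of_lt hnp _, ?_⟩⟩
  · rw [linLoss_update z q _ hn]
    linarith [mul_nonpos_of_nonpos_of_nonneg hz.le (sub_nonneg.2 hq_succ)]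
  · rw [linLoss_update z q _ hn]
    linarith [mul_nonpos_of_nonneg_of_nonpos hz.le (sub_nonpos.2 hq_pred)]

/-- for a feasible sequence, unimodal with peak `p`, and an index `n` with
`1 < n < p`: if `z_n < 0`, replacing `q_n` by `q_{n+1}` keeps feasibility and unimodality
with the same peak and does not increase the linear loss; if `z_n > 0`, the same holds
for replacing `q_n` by `q_{n-1}`. -/
theorem stmt2 (N p n : ℕ) (z q : ℕ → ℝ) (Q0 Q1 : ℝ) (hQ : Q0 ≤ Q1)
    (hN : 1 ≤ N) (hpN : p ≤ N)
    (hfeas : Feasible Q0 Q1 N q)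
    (hup : NondecOn q 1 p) (hdown : NonincOn q p N)
    (h1n : 1 < n) (hnp : n < p) :
    (z n < 0 →
      Feasible Q0 Q1 N (Function.update q n (q (n + 1))) ∧
      NondecOn (Function.update q n (q (n + 1))) 1 p ∧
      NonincOn (Function.update q n (q (n + 1))) p N ∧
      linLoss z (Function.update q n (q (n + 1))) N ≤ linLoss z q N) ∧
    (0 < z n →
      Feasible Q0 Q1 N (Function.update q n (q (n - 1))) ∧
      NondecOn (Function.update q n (q (n - 1))) 1 p ∧
      NonincOn (Function.update q n (q (n - 1))) p N ∧
      linLoss z (Function.update q n (q (n - 1))) N ≤ linLoss z q N) :=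
  stmt2_general N p n z q Q0 Q1 hpN hfeas hup hdown h1n hnp
end

section
/- Let N ≥ 1, let z_1,…,z_N be real numbers, let Q_0 ≤ Q_1 be reals, and let q be a feasible unimodal sequence with peak index p that is constant on a block {a,…,b} with 1 < a ≤ b < p (q_n = c for all a ≤ n ≤ b). If ∑_{n=a}^{b} z_n < 0, then the sequence q' obtained from q by setting q'_n = q_{b+1} for all a ≤ n ≤ b (and q'_j = q_j otherwise) is feasible, unimodal with the same peak p, and satisfies ∑_j z_j q'_j ≤ ∑_j z_j q_j. If instead ∑_{n=a}^{b} z_n > 0, the analogous replacement of the block value by q_{a-1} yields a feasible unimodal sequence with linear loss at most that of q. -/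
/-- Replace the values of `q` on the block `{a,…,b}` by the constant `v`. -/
def blockUpdate (q : ℕ → ℝ) (a b : ℕ) (v : ℝ) : ℕ → ℝ :=
  fun j => if a ≤ j ∧ j ≤ b then v else q j

/-!
Flattening a constant block `{a,…,b}` of value `c` to a value `v` changes the linear loss by
`(∑_{n=a}^b z_n) (v - c)`. Any `v` between the neighbouring values `q_{a-1}` and `q_{b+1}`
keeps the sequence feasible and nondecreasing on the ascending part, and the part after the
block is untouched. Choosing `v = q_{b+1} ≥ c` when the block sum is negative, and
`v = q_{a-1} ≤ c` when it is positive, makes the change of loss nonpositive.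
-/

namespace blockUpdate

variable {q : ℕ → ℝ} {a b : ℕ} {v : ℝ}

theorem apply_of_lt {j : ℕ} (hj : b < j) : blockUpdate q a b v j = q j :=
  if_neg (by omega)

theorem feasible {Q0 Q1 : ℝ} {N : ℕ} (hq : Feasible Q0 Q1 N q) (hv0 : Q0 ≤ v) (hv1 : v ≤ Q1) :
    Feasible Q0 Q1 N (blockUpdate q a b v) := by
  intro n h1 h2
  unfold blockUpdate
  split_ifs
  exacts [⟨hv0, hv1⟩, hq n h1 h2]

theorem nondecOn {l r : ℕ} (hq : NondecOn q l r) (hla : l < a) (hbr : b < r)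
    (hlo : q (a - 1) ≤ v) (hhi : v ≤ q (b + 1)) :
    NondecOn (blockUpdate q a b v) l r := by
  intro i j hi hij hj
  unfold blockUpdate
  split_ifs
  · exact le_rfl
  · exact hhi.trans (hq (b + 1) j (by omega) (by omega) hj)
  · exact (hq i (a - 1) hi (by omega) (by omega)).trans hlo
  · exact hq i j hi hij hj

theorem nonincOn {l r : ℕ} (hq : NonincOn q l r) (hbl : b < l) :
    NonincOn (blockUpdate q a b v) l r := by
  intro i j hi hij hj
  rw [apply_of_lt (by omega), apply_of_lt (by omega)]
  exact hq i j hi hij hj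

theorem linLoss_sub {c : ℝ} (z : ℕ → ℝ) {N : ℕ} (ha : 1 ≤ a) (hbN : b ≤ N)
    (hconst : ∀ n, a ≤ n → n ≤ b → q n = c) :
    linLoss z (blockUpdate q a b v) N - linLoss z q N
      = (∑ n ∈ Finset.Icc a b, z n) * (v - c) := by
  have hsub : Finset.Icc a b ⊆ Finset.Icc 1 N := Finset.Icc_subset_Icc ha hbN
  unfold linLoss
  rw [← Finset.sum_sub_distrib, Finset.sum_mul, ← Finset.sum_subset hsub]
  · refine Finset.sum_congr rfl fun n hn => ?_
    rw [Finset.mem_Icc] at hn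
    simp only [blockUpdate, if_pos hn, hconst n hn.1 hn.2]
    ring
  · intro n _ hn
    rw [Finset.mem_Icc] at hn
    simp only [blockUpdate, if_neg hn, sub_self]

theorem feasible_unimodal_linLoss_le {Q0 Q1 c : ℝ} {N p : ℕ} (z : ℕ → ℝ) (hpN : p ≤ N)
    (hfeas : Feasible Q0 Q1 N q) (hup : NondecOn q 1 p) (hdown : NonincOn q p N)
    (h1a : 1 < a) (hab : a ≤ b) (hbp : b < p) (hconst : ∀ n, a ≤ n → n ≤ b → q n = c)
    (hlo : q (a - 1) ≤ v) (hhi : v ≤ q (b + 1))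
    (hloss : (∑ n ∈ Finset.Icc a b, z n) * (v - c) ≤ 0) :
    Feasible Q0 Q1 N (blockUpdate q a b v) ∧
      NondecOn (blockUpdate q a b v) 1 p ∧
      NonincOn (blockUpdate q a b v) p N ∧
      linLoss z (blockUpdate q a b v) N ≤ linLoss z q N := by
  have hv0 : Q0 ≤ v := (hfeas (a - 1) (by omega) (by omega)).1.trans hlo
  have hv1 : v ≤ Q1 := hhi.trans (hfeas (b + 1) (by omega) (by omega)).2
  refine ⟨feasible hfeas hv0 hv1, nondecOn hup h1a hbp hlo hhi, nonincOn hdown hbp, ?_⟩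
  linarith [linLoss_sub z (v := v) h1a.le (hbp.le.trans hpN) hconst]

end blockUpdate

theorem stmt4_general (N p a b : ℕ) (z q : ℕ → ℝ) (Q0 Q1 c : ℝ)
    (hpN : p ≤ N)
    (hfeas : Feasible Q0 Q1 N q)
    (hup : NondecOn q 1 p) (hdown : NonincOn q p N)
    (h1a : 1 < a) (hab : a ≤ b) (hbp : b < p)
    (hconst : ∀ n, a ≤ n → n ≤ b → q n = c) :
    ((∑ n ∈ Finset.Icc a b, z n) < 0 →
      Feasible Q0 Q1 N (blockUpdate q a b (q (b + 1))) ∧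
      NondecOn (blockUpdate q a b (q (b + 1))) 1 p ∧
      NonincOn (blockUpdate q a b (q (b + 1))) p N ∧
      linLoss z (blockUpdate q a b (q (b + 1))) N ≤ linLoss z q N) ∧
    (0 < (∑ n ∈ Finset.Icc a b, z n) →
      Feasible Q0 Q1 N (blockUpdate q a b (q (a - 1))) ∧
      NondecOn (blockUpdate q a b (q (a - 1))) 1 p ∧
      NonincOn (blockUpdate q a b (q (a - 1))) p N ∧
      linLoss z (blockUpdate q a b (q (a - 1))) N ≤ linLoss z q N) := by
  have hmono : q (a - 1) ≤ q (b + 1) := hup (a - 1) (b + 1) (by omega) (by omega) hbp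
  have hc_le : c ≤ q (b + 1) := hconst b hab le_rfl ▸ hup b (b + 1) (by omega) (by omega) hbp
  have hle_c : q (a - 1) ≤ c := hconst a le_rfl hab ▸ hup (a - 1) a (by omega) (by omega) (by omega)
  constructor
  · intro hneg
    exact blockUpdate.feasible_unimodal_linLoss_le z hpN hfeas hup hdown h1a hab hbp hconst
      hmono le_rfl (mul_nonpos_of_nonpos_of_nonneg hneg.le (sub_nonneg.2 hc_le))
  · intro hpos
    exact blockUpdate.feasible_unimodal_linLoss_le z hpN hfeas hup hdown h1a hab hbp hconst
      le_rfl hmono (mul_nonpos_of_nonneg_of_nonpos hpos.le (sub_nonpos.2 hle_c))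

/-- for a feasible sequence, unimodal with peak `p`, constant equal to `c`
on a block `{a,…,b}` with `1 < a ≤ b < p`: if the block's cumulative loss is negative,
replacing the block value by `q_{b+1}` keeps feasibility and unimodality with the same
peak and does not increase the linear loss; if the block's cumulative loss is positive,
the same holds for replacing the block value by `q_{a-1}`. -/
theorem stmt4 (N p a b : ℕ) (z q : ℕ → ℝ) (Q0 Q1 c : ℝ) (hQ : Q0 ≤ Q1)
    (hN : 1 ≤ N) (hpN : p ≤ N)
    (hfeas : Feasible Q0 Q1 N q)
    (hup : NondecOn q 1 p) (hdown : NonincOn q p N)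
    (h1a : 1 < a) (hab : a ≤ b) (hbp : b < p)
    (hconst : ∀ n, a ≤ n → n ≤ b → q n = c) :
    ((∑ n ∈ Finset.Icc a b, z n) < 0 →
      Feasible Q0 Q1 N (blockUpdate q a b (q (b + 1))) ∧
      NondecOn (blockUpdate q a b (q (b + 1))) 1 p ∧
      NonincOn (blockUpdate q a b (q (b + 1))) p N ∧
      linLoss z (blockUpdate q a b (q (b + 1))) N ≤ linLoss z q N) ∧
    (0 < (∑ n ∈ Finset.Icc a b, z n) →
      Feasible Q0 Q1 N (blockUpdate q a b (q (a - 1))) ∧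
      NondecOn (blockUpdate q a b (q (a - 1))) 1 p ∧
      NonincOn (blockUpdate q a b (q (a - 1))) p N ∧
      linLoss z (blockUpdate q a b (q (a - 1))) N ≤ linLoss z q N) :=
  stmt4_general N p a b z q Q0 Q1 c hpN hfeas hup hdown h1a hab hbp hconst
end

section
/- Let N ≥ 1, let z_1,…,z_N be real numbers, and let Q_0 ≤ Q_1 be reals. Then the minimum of the linear loss ∑_{n=1}^N z_n q_n over all feasible unimodal sequences q equals min over 0 ≤ τ_1 ≤ τ_2 ≤ N of L_{τ_1,τ_2} := Q_0 ∑_{n=1}^{τ_1} z_n + Q_1 ∑_{n=τ_1+1}^{τ_2} z_n + Q_0 ∑_{n=τ_2+1}^{N} z_n. -/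
/-- Rectangular loss `L_{τ1,τ2} = Q0 ∑_{n=1}^{τ1} z_n + Q1 ∑_{n=τ1+1}^{τ2} z_n
  + Q0 ∑_{n=τ2+1}^{N} z_n`. -/
noncomputable def rectLoss (z : ℕ → ℝ) (Q0 Q1 : ℝ) (N τ1 τ2 : ℕ) : ℝ :=
  Q0 * ∑ n ∈ Finset.Icc 1 τ1, z n + Q1 * ∑ n ∈ Finset.Icc (τ1 + 1) τ2, z n
    + Q0 * ∑ n ∈ Finset.Icc (τ2 + 1) N, z n

/-!
Subtracting `Q0` reduces the claim to a nonnegative unimodal `r ≤ Q1 - Q0`, for which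
`∑ z r ≥ (Q1 - Q0) c` with `c` the least interval sum of `z`. Every superlevel set of a
unimodal sequence is an interval, so peeling off the smallest positive value `t` of `r`
writes `r = t • 𝟙_{supp r} + (r - t)⁺`, with `(r - t)⁺` unimodal and of smaller support;
induction on the support gives the bound, and rectangles attain it.
-/

open Finset

theorem Finset.exists_eq_Ioc_of_ordConnected {S : Finset ℕ} {N : ℕ}
    (hS : (S : Set ℕ).OrdConnected) (hSN : S ⊆ Icc 1 N) :
    ∃ a b, a ≤ b ∧ b ≤ N ∧ S = Ioc a b := by
  rcases S.eq_empty_or_nonempty with rfl | hne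
  · exact ⟨0, 0, le_rfl, Nat.zero_le N, by simp⟩
  have hmin := mem_Icc.1 (hSN (S.min'_mem hne))
  have hmax := mem_Icc.1 (hSN (S.max'_mem hne))
  have hle := S.min'_le _ (S.max'_mem hne)
  refine ⟨S.min' hne - 1, S.max' hne, by omega, hmax.2, ?_⟩
  ext n
  constructor
  · intro hn
    have := S.min'_le n hn
    have := S.le_max' n hn
    rw [mem_Ioc]
    omega
  · intro hn
    rw [mem_Ioc] at hn
    exact hS.out (S.min'_mem hne) (S.max'_mem hne) ⟨by omega, hn.2⟩

theorem exists_forall_sum_Ioc_le (z : ℕ → ℝ) (N : ℕ) :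
    ∃ a₀ b₀, a₀ ≤ b₀ ∧ b₀ ≤ N ∧
      ∀ a b, a ≤ b → b ≤ N → ∑ n ∈ Ioc a₀ b₀, z n ≤ ∑ n ∈ Ioc a b, z n := by
  obtain ⟨⟨a₀, b₀⟩, h₀, hmin⟩ :=
    ((range (N + 1) ×ˢ range (N + 1)).filter (fun p => p.1 ≤ p.2)).exists_min_image
      (fun p => ∑ n ∈ Ioc p.1 p.2, z n) ⟨(0, 0), by simp⟩
  simp only [mem_filter, mem_product, mem_range] at h₀
  exact ⟨a₀, b₀, h₀.2, by omega, fun a b hab hbN =>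
    hmin (a, b) (by simp only [mem_filter, mem_product, mem_range]; omega)⟩

theorem Finset.sum_mul_eq_sum_mul_max_sub_add {ι : Type*} {s : Finset ι} (z : ι → ℝ)
    {r : ι → ℝ} {t : ℝ} (hr : ∀ n ∈ s, 0 ≤ r n) (ht : 0 ≤ t)
    (htr : ∀ n ∈ s, 0 < r n → t ≤ r n) :
    ∑ n ∈ s, z n * r n
      = ∑ n ∈ s, z n * max (r n - t) 0 + t * ∑ n ∈ s.filter (fun n => 0 < r n), z n := by
  rw [mul_sum, sum_filter, ← sum_add_distrib]
  refine sum_congr rfl fun n hn => ?_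
  by_cases hpos : 0 < r n
  · simp only [hpos, if_true, max_eq_left (sub_nonneg.2 (htr n hn hpos))]
    ring
  · simp [le_antisymm (not_lt.1 hpos) (hr n hn), ht]

namespace UnimodalOn

variable {N : ℕ} {r : ℕ → ℝ}

theorem comp_monotone (hr : UnimodalOn N r) {f : ℝ → ℝ} (hf : Monotone f) :
    UnimodalOn N (fun n => f (r n)) := by
  obtain ⟨p, hp1, hpN, hup, hdown⟩ := hr
  exact ⟨p, hp1, hpN, fun i j h1 h2 h3 => hf (hup i j h1 h2 h3),
    fun i j h1 h2 h3 => hf (hdown i j h1 h2 h3)⟩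

theorem min_le {i j k : ℕ} (hr : UnimodalOn N r) (hi : 1 ≤ i) (hij : i ≤ j) (hjk : j ≤ k)
    (hk : k ≤ N) : min (r i) (r k) ≤ r j := by
  obtain ⟨p, -, -, hup, hdown⟩ := hr
  by_cases hjp : j ≤ p
  · exact (min_le_left _ _).trans (hup i j hi hij hjp)
  · exact (min_le_right _ _).trans (hdown j k (by omega) hjk hk)

theorem ordConnected_superlevel (hr : UnimodalOn N r) (t : ℝ) :
    (((Icc 1 N).filter (fun n => t < r n) : Finset ℕ) : Set ℕ).OrdConnected := by
  refine ⟨fun i hi k hk j hj => ?_⟩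
  simp only [coe_filter, mem_Icc] at hi hk ⊢
  exact ⟨⟨hi.1.1.trans hj.1, hj.2.trans hk.1.2⟩,
    (lt_min hi.2 hk.2).trans_le (hr.min_le hi.1.1 hj.1 hj.2 hk.1.2)⟩

theorem mul_le_sum_mul {z : ℕ → ℝ} {c D : ℝ}
    (hc : ∀ a b, a ≤ b → b ≤ N → c ≤ ∑ n ∈ Ioc a b, z n) (hr : UnimodalOn N r)
    (hD : 0 ≤ D) (hbd : ∀ n ∈ Icc 1 N, 0 ≤ r n ∧ r n ≤ D) :
    D * c ≤ ∑ n ∈ Icc 1 N, z n * r n := by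
  induction hk : #((Icc 1 N).filter (fun n => 0 < r n)) using Nat.strong_induction_on
    generalizing r D with
  | _ k ih =>
  set S := (Icc 1 N).filter (fun n => 0 < r n)
  rcases S.eq_empty_or_nonempty with hS | hS
  · have hzero : ∀ n ∈ Icc 1 N, z n * r n = 0 := fun n hn => by
      have : n ∉ S := hS ▸ notMem_empty n
      simp only [S, mem_filter, not_and, not_lt] at this
      rw [le_antisymm (this hn) (hbd n hn).1, mul_zero]
    have hc0 : c ≤ 0 := by simpa using hc 0 0 le_rfl (Nat.zero_le N)
    rw [sum_eq_zero hzero]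
    exact mul_nonpos_of_nonneg_of_nonpos hD hc0
  obtain ⟨n₀, hn₀, hmin⟩ := S.exists_min_image r hS
  set t := r n₀
  have ht : 0 < t := (mem_filter.1 hn₀).2
  have htD : t ≤ D := (hbd n₀ (mem_filter.1 hn₀).1).2
  set r' : ℕ → ℝ := fun n => max (r n - t) 0
  have hr' : UnimodalOn N r' :=
    hr.comp_monotone fun x y h => max_le_max (sub_le_sub_right h t) le_rfl
  have hbd' : ∀ n ∈ Icc 1 N, 0 ≤ r' n ∧ r' n ≤ D - t := fun n hn =>
    ⟨le_max_right _ _, max_le (by linarith [(hbd n hn).2]) (by linarith)⟩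
  have hsupp : (Icc 1 N).filter (fun n => 0 < r' n) ⊂ S := by
    refine (ssubset_iff_of_subset fun n hn => ?_).2 ⟨n₀, hn₀, ?_⟩
    · simp only [r', mem_filter, lt_max_iff, lt_irrefl, or_false, sub_pos] at hn
      exact mem_filter.2 ⟨hn.1, ht.trans hn.2⟩
    · simp [r', t]
  have hsplit := sum_mul_eq_sum_mul_max_sub_add z (fun n hn => (hbd n hn).1) ht.le
    fun n hn hpos => hmin n (mem_filter.2 ⟨hn, hpos⟩)
  have hS_sum : c ≤ ∑ n ∈ S, z n := by
    obtain ⟨a, b, hab, hbN, hSab⟩ :=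
      exists_eq_Ioc_of_ordConnected (S := S) (hr.ordConnected_superlevel 0) (filter_subset _ _)
    rw [hSab]
    exact hc a b hab hbN
  have ih' := ih _ (hk ▸ card_lt_card hsupp) hr' (by linarith) hbd' rfl
  calc D * c = (D - t) * c + t * c := by ring
    _ ≤ ∑ n ∈ Icc 1 N, z n * r' n + t * ∑ n ∈ S, z n :=
      add_le_add ih' (mul_le_mul_of_nonneg_left hS_sum ht.le)
    _ = ∑ n ∈ Icc 1 N, z n * r n := hsplit.symm

end UnimodalOn

theorem rectLoss_eq_add_mul_sum_Ioc (z : ℕ → ℝ) (Q0 Q1 : ℝ) {N a b : ℕ} (hab : a ≤ b)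
    (hbN : b ≤ N) :
    rectLoss z Q0 Q1 N a b
      = Q0 * ∑ n ∈ Icc 1 N, z n + (Q1 - Q0) * ∑ n ∈ Ioc a b, z n := by
  have hsplit : ∑ n ∈ Ioc 0 a, z n + ∑ n ∈ Ioc a b, z n + ∑ n ∈ Ioc b N, z n
      = ∑ n ∈ Ioc 0 N, z n := by
    rw [sum_Ioc_consecutive _ (Nat.zero_le a) hab, sum_Ioc_consecutive _ (Nat.zero_le b) hbN]
  have hIcc_one : ∀ m, Icc 1 m = Ioc 0 m := Icc_add_one_left_eq_Ioc 0
  simp only [rectLoss, Icc_add_one_left_eq_Ioc, hIcc_one]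
  linear_combination Q0 * hsplit

def rectSeq (Q0 Q1 : ℝ) (a b : ℕ) (n : ℕ) : ℝ :=
  if a < n ∧ n ≤ b then Q1 else Q0

theorem rectSeq_feasible {Q0 Q1 : ℝ} (hQ : Q0 ≤ Q1) (N a b : ℕ) :
    Feasible Q0 Q1 N (rectSeq Q0 Q1 a b) := fun n _ _ => by
  unfold rectSeq
  split_ifs <;> exact ⟨by linarith, by linarith⟩

theorem rectSeq_unimodalOn {Q0 Q1 : ℝ} (hQ : Q0 ≤ Q1) {N : ℕ} (hN : 1 ≤ N) (a b : ℕ) :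
    UnimodalOn N (rectSeq Q0 Q1 a b) := by
  refine ⟨min (a + 1) N, by omega, min_le_right _ _, fun i j _ _ _ => ?_, fun i j _ _ _ => ?_⟩
  all_goals unfold rectSeq; split_ifs <;> first | exact le_rfl | exact hQ | omega

theorem linLoss_rectSeq (z : ℕ → ℝ) (Q0 Q1 : ℝ) {N a b : ℕ} (hab : a ≤ b) (hbN : b ≤ N) :
    linLoss z (rectSeq Q0 Q1 a b) N = rectLoss z Q0 Q1 N a b := by
  have hterm : ∀ n, z n * rectSeq Q0 Q1 a b n
      = Q0 * z n + if n ∈ Ioc a b then (Q1 - Q0) * z n else 0 := fun n => by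
    simp only [rectSeq, mem_Ioc]
    split_ifs <;> ring
  have hsub : Ioc a b ⊆ Icc 1 N := fun n hn => by
    simp only [mem_Ioc, mem_Icc] at hn ⊢
    omega
  rw [linLoss, rectLoss_eq_add_mul_sum_Ioc z Q0 Q1 hab hbN]
  simp only [hterm, sum_add_distrib, sum_ite_mem, inter_eq_right.2 hsub, ← mul_sum]

/-- the minimum of the linear loss over all feasible unimodal sequences
equals the minimum of the rectangular losses `L_{τ1,τ2}` over `0 ≤ τ1 ≤ τ2 ≤ N`;
both minima are attained and coincide. -/
theorem stmt6 (N : ℕ) (hN : 1 ≤ N) (z : ℕ → ℝ) (Q0 Q1 : ℝ) (hQ : Q0 ≤ Q1) :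
    ∃ m : ℝ,
      IsLeast {L : ℝ | ∃ q : ℕ → ℝ, Feasible Q0 Q1 N q ∧ UnimodalOn N q ∧
        L = linLoss z q N} m ∧
      IsLeast {L : ℝ | ∃ τ1 τ2 : ℕ, τ1 ≤ τ2 ∧ τ2 ≤ N ∧
        L = rectLoss z Q0 Q1 N τ1 τ2} m := by
  obtain ⟨a₀, b₀, hab₀, hb₀, hmin⟩ := exists_forall_sum_Ioc_le z N
  have hD : 0 ≤ Q1 - Q0 := sub_nonneg.2 hQ
  refine ⟨rectLoss z Q0 Q1 N a₀ b₀, ⟨⟨rectSeq Q0 Q1 a₀ b₀, rectSeq_feasible hQ N a₀ b₀,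
    rectSeq_unimodalOn hQ hN a₀ b₀, (linLoss_rectSeq z Q0 Q1 hab₀ hb₀).symm⟩, ?_⟩,
    ⟨⟨a₀, b₀, hab₀, hb₀, rfl⟩, ?_⟩⟩
  · rintro _ ⟨q, hq, hqu, rfl⟩
    have hbound := (hqu.comp_monotone fun x y h => sub_le_sub_right h Q0).mul_le_sum_mul hmin hD
      fun n hn => by
        obtain ⟨h0, h1⟩ := hq n (mem_Icc.1 hn).1 (mem_Icc.1 hn).2
        exact ⟨sub_nonneg.2 h0, sub_le_sub_right h1 Q0⟩
    have hshift : ∑ n ∈ Icc 1 N, z n * (q n - Q0)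
        = linLoss z q N - Q0 * ∑ n ∈ Icc 1 N, z n := by
      simp only [linLoss, mul_sub, sum_sub_distrib, mul_sum, mul_comm]
    rw [rectLoss_eq_add_mul_sum_Ioc z Q0 Q1 hab₀ hb₀]
    linarith
  · rintro _ ⟨a, b, hab, hbN, rfl⟩
    rw [rectLoss_eq_add_mul_sum_Ioc z Q0 Q1 hab₀ hb₀, rectLoss_eq_add_mul_sum_Ioc z Q0 Q1 hab hbN]
    exact add_le_add_right (mul_le_mul_of_nonneg_left (hmin a b hab hbN) hD) _
end

section
/- Let N ≥ 1, let z_1,…,z_N be real numbers, and let Q_0 ≤ Q_1 be reals. Define f(n) = min over 0 ≤ k ≤ n of [Q_0 ∑_{i=1}^{k} z_i + Q_1 ∑_{i=k+1}^{n} z_i] and g(n) = min over n ≤ m ≤ N of [Q_1 ∑_{i=n+1}^{m} z_i + Q_0 ∑_{i=m+1}^{N} z_i], for 0 ≤ n ≤ N. Then min over 0 ≤ τ_1 ≤ τ_2 ≤ N of the rectangular loss L_{τ_1,τ_2} equals min over 0 ≤ n ≤ N of [f(n) + g(n)]. -/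
/-- `f n`: optimal nondecreasing step loss on the first `n` samples,
`f(n) = min_{0 ≤ k ≤ n} [Q0 ∑_{i=1}^{k} z_i + Q1 ∑_{i=k+1}^{n} z_i]`. -/
noncomputable def fOpt (z : ℕ → ℝ) (Q0 Q1 : ℝ) (n : ℕ) : ℝ :=
  (Finset.range (n + 1)).inf' Finset.nonempty_range_add_one
    (fun k => Q0 * ∑ i ∈ Finset.Icc 1 k, z i + Q1 * ∑ i ∈ Finset.Icc (k + 1) n, z i)

/-- `g n`: optimal nonincreasing step loss on the last `N - n` samples,
`g(n) = min_{n ≤ m ≤ N} [Q1 ∑_{i=n+1}^{m} z_i + Q0 ∑_{i=m+1}^{N} z_i]`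
(the threshold `m = n + j` is parametrized by `j ∈ {0,…,N-n}`). -/
noncomputable def gOpt (z : ℕ → ℝ) (Q0 Q1 : ℝ) (N n : ℕ) : ℝ :=
  (Finset.range (N - n + 1)).inf' Finset.nonempty_range_add_one
    (fun j => Q1 * ∑ i ∈ Finset.Icc (n + 1) (n + j), z i
      + Q0 * ∑ i ∈ Finset.Icc (n + j + 1) N, z i)

/-!
For `k ≤ n ≤ m` the rectangular loss `L_{k,m}` splits at `n` into a nondecreasing step loss on
the first `n` samples (threshold `k`) and a nonincreasing step loss on the last `N - n` samples
(threshold `m`). Hence `f(n) + g(n)` is the least `L_{k,m}` over `k ≤ n ≤ m`, and every pair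
`τ₁ ≤ τ₂` is covered by `n = τ₁`, so minimizing over `n` gives the least rectangular loss.
-/

open Finset

lemma sum_Icc_add_one_consecutive {M : Type*} [AddCommMonoid M] (f : ℕ → M) {a b c : ℕ}
    (hab : a ≤ b) (hbc : b ≤ c) :
    ∑ i ∈ Icc (a + 1) b, f i + ∑ i ∈ Icc (b + 1) c, f i = ∑ i ∈ Icc (a + 1) c, f i := by
  simp only [Icc_add_one_left_eq_Ioc]
  exact sum_Ioc_consecutive f hab hbc

section StepLosses

variable (z : ℕ → ℝ) (Q0 Q1 : ℝ)

lemma rectLoss_eq_add_of_le {N k n m : ℕ} (hkn : k ≤ n) (hnm : n ≤ m) :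
    rectLoss z Q0 Q1 N k m
      = (Q0 * ∑ i ∈ Icc 1 k, z i + Q1 * ∑ i ∈ Icc (k + 1) n, z i)
        + (Q1 * ∑ i ∈ Icc (n + 1) m, z i + Q0 * ∑ i ∈ Icc (m + 1) N, z i) := by
  rw [rectLoss, ← sum_Icc_add_one_consecutive z hkn hnm]
  ring

lemma fOpt_le {k n : ℕ} (hkn : k ≤ n) :
    fOpt z Q0 Q1 n ≤ Q0 * ∑ i ∈ Icc 1 k, z i + Q1 * ∑ i ∈ Icc (k + 1) n, z i :=
  inf'_le _ (mem_range_succ_iff.mpr hkn)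

lemma exists_le_fOpt_eq (n : ℕ) :
    ∃ k ≤ n, fOpt z Q0 Q1 n = Q0 * ∑ i ∈ Icc 1 k, z i + Q1 * ∑ i ∈ Icc (k + 1) n, z i := by
  obtain ⟨k, hk, hk_eq⟩ := exists_mem_eq_inf' nonempty_range_add_one
    (fun k => Q0 * ∑ i ∈ Icc 1 k, z i + Q1 * ∑ i ∈ Icc (k + 1) n, z i)
  exact ⟨k, mem_range_succ_iff.mp hk, hk_eq⟩

lemma gOpt_le {N n m : ℕ} (hnm : n ≤ m) (hmN : m ≤ N) :
    gOpt z Q0 Q1 N n ≤ Q1 * ∑ i ∈ Icc (n + 1) m, z i + Q0 * ∑ i ∈ Icc (m + 1) N, z i := by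
  have hj : m - n ∈ range (N - n + 1) := mem_range_succ_iff.mpr (by omega)
  have h := inf'_le (fun j => Q1 * ∑ i ∈ Icc (n + 1) (n + j), z i
    + Q0 * ∑ i ∈ Icc (n + j + 1) N, z i) hj
  rwa [Nat.add_sub_cancel' hnm] at h

lemma exists_le_gOpt_eq {N n : ℕ} (hnN : n ≤ N) :
    ∃ m, n ≤ m ∧ m ≤ N ∧
      gOpt z Q0 Q1 N n = Q1 * ∑ i ∈ Icc (n + 1) m, z i + Q0 * ∑ i ∈ Icc (m + 1) N, z i := by
  obtain ⟨j, hj, hj_eq⟩ := exists_mem_eq_inf' nonempty_range_add_one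
    (fun j => Q1 * ∑ i ∈ Icc (n + 1) (n + j), z i + Q0 * ∑ i ∈ Icc (n + j + 1) N, z i)
  have hj : j ≤ N - n := mem_range_succ_iff.mp hj
  exact ⟨n + j, by omega, by omega, hj_eq⟩

lemma exists_rectLoss_eq_fOpt_add_gOpt {N n : ℕ} (hnN : n ≤ N) :
    ∃ τ1 τ2, τ1 ≤ τ2 ∧ τ2 ≤ N ∧
      rectLoss z Q0 Q1 N τ1 τ2 = fOpt z Q0 Q1 n + gOpt z Q0 Q1 N n := by
  obtain ⟨k, hkn, hf⟩ := exists_le_fOpt_eq z Q0 Q1 n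
  obtain ⟨m, hnm, hmN, hg⟩ := exists_le_gOpt_eq z Q0 Q1 hnN
  exact ⟨k, m, hkn.trans hnm, hmN, by rw [rectLoss_eq_add_of_le z Q0 Q1 hkn hnm, hf, hg]⟩

lemma fOpt_add_gOpt_le_rectLoss {N τ1 τ2 : ℕ} (h12 : τ1 ≤ τ2) (h2N : τ2 ≤ N) :
    fOpt z Q0 Q1 τ1 + gOpt z Q0 Q1 N τ1 ≤ rectLoss z Q0 Q1 N τ1 τ2 := by
  rw [rectLoss_eq_add_of_le z Q0 Q1 le_rfl h12]
  exact add_le_add (fOpt_le z Q0 Q1 le_rfl) (gOpt_le z Q0 Q1 h12 h2N)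

end StepLosses

theorem stmt8_general (N : ℕ) (z : ℕ → ℝ) (Q0 Q1 : ℝ) :
    ∃ m : ℝ,
      IsLeast {L : ℝ | ∃ τ1 τ2 : ℕ, τ1 ≤ τ2 ∧ τ2 ≤ N ∧
        L = rectLoss z Q0 Q1 N τ1 τ2} m ∧
      IsLeast {L : ℝ | ∃ n : ℕ, n ≤ N ∧
        L = fOpt z Q0 Q1 n + gOpt z Q0 Q1 N n} m := by
  obtain ⟨n, hnN, hn_min⟩ := Set.exists_min_image (Set.Iic N)
    (fun n => fOpt z Q0 Q1 n + gOpt z Q0 Q1 N n) (Set.finite_Iic N) ⟨0, Nat.zero_le N⟩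
  obtain ⟨τ1, τ2, h12, h2N, hτ⟩ := exists_rectLoss_eq_fOpt_add_gOpt z Q0 Q1 hnN
  refine ⟨_, ⟨⟨τ1, τ2, h12, h2N, hτ.symm⟩, ?_⟩, ⟨⟨n, hnN, rfl⟩, ?_⟩⟩
  · rintro _ ⟨σ1, σ2, hσ12, hσ2N, rfl⟩
    exact (hn_min σ1 (hσ12.trans hσ2N)).trans (fOpt_add_gOpt_le_rectLoss z Q0 Q1 hσ12 hσ2N)
  · rintro _ ⟨n', hn', rfl⟩
    exact hn_min n' hn'

/-- the minimum of the rectangular losses over `0 ≤ τ1 ≤ τ2 ≤ N` equals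
the minimum over `0 ≤ n ≤ N` of `f(n) + g(n)`; both minima are attained and coincide. -/
theorem stmt8 (N : ℕ) (hN : 1 ≤ N) (z : ℕ → ℝ) (Q0 Q1 : ℝ) (hQ : Q0 ≤ Q1) :
    ∃ m : ℝ,
      IsLeast {L : ℝ | ∃ τ1 τ2 : ℕ, τ1 ≤ τ2 ∧ τ2 ≤ N ∧
        L = rectLoss z Q0 Q1 N τ1 τ2} m ∧
      IsLeast {L : ℝ | ∃ n : ℕ, n ≤ N ∧
        L = fOpt z Q0 Q1 n + gOpt z Q0 Q1 N n} m :=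
  stmt8_general N z Q0 Q1
end

section
/- Let Q_0 ≤ Q_1 be reals, and let z⁰ = (z⁰_1,…,z⁰_{N_0}) and z¹ = (z¹_1,…,z¹_{N_1}) be two finite real sequences with N_0, N_1 ≥ 1. For a finite sequence w of length M, define R(w) = min over 0 ≤ k ≤ m ≤ M of [Q_0 ∑_{i=1}^{k} w_i + Q_1 ∑_{i=k+1}^{m} w_i + Q_0 ∑_{i=m+1}^{M} w_i], U(w) = min over 0 ≤ k ≤ M of [Q_0 ∑_{i=1}^{k} w_i + Q_1 ∑_{i=k+1}^{M} w_i], D(w) = min over 0 ≤ k ≤ M of [Q_1 ∑_{i=1}^{k} w_i + Q_0 ∑_{i=k+1}^{M} w_i], and S(w) = ∑_{i=1}^{M} w_i. Then for the concatenation z⁰ ++ z¹: R(z⁰ ++ z¹) = min( R(z⁰) + Q_0 S(z¹) , Q_0 S(z⁰) + R(z¹) , U(z⁰) + D(z¹) ). -/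
/-- Total sum `S(w) = ∑_{i=1}^{M} w_i`. -/
noncomputable def Sw (w : ℕ → ℝ) (M : ℕ) : ℝ := ∑ i ∈ Finset.Icc 1 M, w i

/-- Optimal rectangular loss
`R(w) = min_{0 ≤ k ≤ m ≤ M} [Q0 ∑_{i=1}^{k} w_i + Q1 ∑_{i=k+1}^{m} w_i + Q0 ∑_{i=m+1}^{M} w_i]`. -/
noncomputable def Rw (Q0 Q1 : ℝ) (w : ℕ → ℝ) (M : ℕ) : ℝ :=
  (Finset.range (M + 1)).inf' Finset.nonempty_range_add_one (fun m =>
    (Finset.range (m + 1)).inf' Finset.nonempty_range_add_one (fun k =>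
      Q0 * ∑ i ∈ Finset.Icc 1 k, w i + Q1 * ∑ i ∈ Finset.Icc (k + 1) m, w i
        + Q0 * ∑ i ∈ Finset.Icc (m + 1) M, w i))

/-- Optimal nondecreasing step loss
`U(w) = min_{0 ≤ k ≤ M} [Q0 ∑_{i=1}^{k} w_i + Q1 ∑_{i=k+1}^{M} w_i]`. -/
noncomputable def Uw (Q0 Q1 : ℝ) (w : ℕ → ℝ) (M : ℕ) : ℝ :=
  (Finset.range (M + 1)).inf' Finset.nonempty_range_add_one (fun k =>
    Q0 * ∑ i ∈ Finset.Icc 1 k, w i + Q1 * ∑ i ∈ Finset.Icc (k + 1) M, w i)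

/-- Optimal nonincreasing step loss
`D(w) = min_{0 ≤ k ≤ M} [Q1 ∑_{i=1}^{k} w_i + Q0 ∑_{i=k+1}^{M} w_i]`. -/
noncomputable def Dw (Q0 Q1 : ℝ) (w : ℕ → ℝ) (M : ℕ) : ℝ :=
  (Finset.range (M + 1)).inf' Finset.nonempty_range_add_one (fun k =>
    Q1 * ∑ i ∈ Finset.Icc 1 k, w i + Q0 * ∑ i ∈ Finset.Icc (k + 1) M, w i)

/-- Concatenation of a length-`N0` sequence `z0` (indices `1,…,N0`) with a sequence `z1`
(indices `1,…,N1`), giving indices `1,…,N0+N1`. -/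
def concatSeq (z0 : ℕ → ℝ) (N0 : ℕ) (z1 : ℕ → ℝ) : ℕ → ℝ :=
  fun i => if i ≤ N0 then z0 i else z1 (i - N0)

/-! All three losses are affine in the partial sums `Sw w n`, and the partial sums of
`z⁰ ++ z¹` are those of `z⁰` up to `N0`, then `Sw z⁰ N0 + Sw z¹ (n - N0)`. So an optimal rectangle
`k ≤ m` for the concatenation either lies in `z⁰` (`m ≤ N0`), lies in `z¹` (`N0 ≤ k`), or straddles
the junction, where it splits into an up-step of `z⁰` and a down-step of `z¹`; conversely each
of these three shapes is a rectangle for the concatenation. -/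

open Finset

section Losses

variable (Q0 Q1 : ℝ) (w : ℕ → ℝ)

lemma sum_Icc_succ_eq_Sw_sub {k m : ℕ} (hkm : k ≤ m) :
    ∑ i ∈ Icc (k + 1) m, w i = Sw w m - Sw w k := by
  have h := sum_Ioc_consecutive w (Nat.zero_le k) hkm
  simp only [← Icc_add_one_left_eq_Ioc, zero_add] at h
  rw [Sw, Sw, ← h, add_sub_cancel_left]

noncomputable def rectCost (M k m : ℕ) : ℝ :=
  Q0 * Sw w k + Q1 * (Sw w m - Sw w k) + Q0 * (Sw w M - Sw w m)

noncomputable def stepCost (M k : ℕ) : ℝ :=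
  Q0 * Sw w k + Q1 * (Sw w M - Sw w k)

lemma Rw_le_rectCost {M k m : ℕ} (hkm : k ≤ m) (hmM : m ≤ M) :
    Rw Q0 Q1 w M ≤ rectCost Q0 Q1 w M k m := by
  refine (inf'_le _ (mem_range_succ_iff.mpr hmM)).trans ?_
  refine (inf'_le _ (mem_range_succ_iff.mpr hkm)).trans_eq ?_
  rw [sum_Icc_succ_eq_Sw_sub w hkm, sum_Icc_succ_eq_Sw_sub w hmM]
  rfl

lemma exists_rectCost_eq_Rw (M : ℕ) :
    ∃ k m, k ≤ m ∧ m ≤ M ∧ Rw Q0 Q1 w M = rectCost Q0 Q1 w M k m := by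
  obtain ⟨m, hm, hRm⟩ := exists_mem_eq_inf' (s := range (M + 1)) nonempty_range_add_one
    fun m => (range (m + 1)).inf' nonempty_range_add_one fun k =>
      Q0 * ∑ i ∈ Icc 1 k, w i + Q1 * ∑ i ∈ Icc (k + 1) m, w i + Q0 * ∑ i ∈ Icc (m + 1) M, w i
  obtain ⟨k, hk, hRk⟩ := exists_mem_eq_inf' (s := range (m + 1)) nonempty_range_add_one
    fun k => Q0 * ∑ i ∈ Icc 1 k, w i + Q1 * ∑ i ∈ Icc (k + 1) m, w i
      + Q0 * ∑ i ∈ Icc (m + 1) M, w i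
  rw [mem_range_succ_iff] at hm hk
  refine ⟨k, m, hk, hm, ?_⟩
  rw [Rw, hRm, hRk, sum_Icc_succ_eq_Sw_sub w hk, sum_Icc_succ_eq_Sw_sub w hm]
  rfl

lemma Uw_le_stepCost {M k : ℕ} (hkM : k ≤ M) : Uw Q0 Q1 w M ≤ stepCost Q0 Q1 w M k := by
  refine (inf'_le _ (mem_range_succ_iff.mpr hkM)).trans_eq ?_
  rw [sum_Icc_succ_eq_Sw_sub w hkM]
  rfl

lemma exists_stepCost_eq_Uw (M : ℕ) : ∃ k ≤ M, Uw Q0 Q1 w M = stepCost Q0 Q1 w M k := by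
  obtain ⟨k, hk, hUk⟩ := exists_mem_eq_inf' (s := range (M + 1)) nonempty_range_add_one
    fun k => Q0 * ∑ i ∈ Icc 1 k, w i + Q1 * ∑ i ∈ Icc (k + 1) M, w i
  rw [mem_range_succ_iff] at hk
  refine ⟨k, hk, ?_⟩
  rw [Uw, hUk, sum_Icc_succ_eq_Sw_sub w hk]
  rfl

lemma Dw_eq_Uw_swap : Dw Q0 Q1 w = Uw Q1 Q0 w := rfl

end Losses

section Concat

variable (Q0 Q1 : ℝ) (z0 z1 : ℕ → ℝ) (N0 N1 : ℕ)

lemma Sw_concatSeq_of_le {n : ℕ} (hn : n ≤ N0) : Sw (concatSeq z0 N0 z1) n = Sw z0 n :=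
  sum_congr rfl fun _ hi => if_pos ((mem_Icc.mp hi).2.trans hn)

lemma Sw_concatSeq_add (n : ℕ) : Sw (concatSeq z0 N0 z1) (N0 + n) = Sw z0 N0 + Sw z1 n := by
  induction n with
  | zero => simpa [Sw] using Sw_concatSeq_of_le z0 z1 N0 le_rfl
  | succ n ih =>
    have hlast : concatSeq z0 N0 z1 (N0 + n + 1) = z1 (n + 1) := by
      simp only [concatSeq, if_neg (by omega : ¬N0 + n + 1 ≤ N0)]
      congr 1
      omega
    simp only [Sw, ← add_assoc, sum_Icc_succ_top (by omega : 1 ≤ N0 + n + 1),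
      sum_Icc_succ_top (by omega : 1 ≤ n + 1)] at ih ⊢
    rw [ih, hlast, add_assoc]

lemma rectCost_concatSeq_of_le {k m : ℕ} (hk : k ≤ N0) (hm : m ≤ N0) :
    rectCost Q0 Q1 (concatSeq z0 N0 z1) (N0 + N1) k m
      = rectCost Q0 Q1 z0 N0 k m + Q0 * Sw z1 N1 := by
  simp only [rectCost, Sw_concatSeq_add, Sw_concatSeq_of_le z0 z1 N0 hk,
    Sw_concatSeq_of_le z0 z1 N0 hm]
  ring

lemma rectCost_concatSeq_add (k m : ℕ) :
    rectCost Q0 Q1 (concatSeq z0 N0 z1) (N0 + N1) (N0 + k) (N0 + m)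
      = Q0 * Sw z0 N0 + rectCost Q0 Q1 z1 N1 k m := by
  simp only [rectCost, Sw_concatSeq_add]
  ring

lemma rectCost_concatSeq_of_le_add {k : ℕ} (hk : k ≤ N0) (j : ℕ) :
    rectCost Q0 Q1 (concatSeq z0 N0 z1) (N0 + N1) k (N0 + j)
      = stepCost Q0 Q1 z0 N0 k + stepCost Q1 Q0 z1 N1 j := by
  simp only [rectCost, stepCost, Sw_concatSeq_add, Sw_concatSeq_of_le z0 z1 N0 hk]
  ring

lemma Rw_concatSeq_le_Rw_add :
    Rw Q0 Q1 (concatSeq z0 N0 z1) (N0 + N1) ≤ Rw Q0 Q1 z0 N0 + Q0 * Sw z1 N1 := by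
  obtain ⟨k, m, hkm, hm, hR⟩ := exists_rectCost_eq_Rw Q0 Q1 z0 N0
  rw [hR, ← rectCost_concatSeq_of_le Q0 Q1 z0 z1 N0 N1 (hkm.trans hm) hm]
  exact Rw_le_rectCost Q0 Q1 _ hkm (by omega)

lemma Rw_concatSeq_le_add_Rw :
    Rw Q0 Q1 (concatSeq z0 N0 z1) (N0 + N1) ≤ Q0 * Sw z0 N0 + Rw Q0 Q1 z1 N1 := by
  obtain ⟨k, m, hkm, hm, hR⟩ := exists_rectCost_eq_Rw Q0 Q1 z1 N1
  rw [hR, ← rectCost_concatSeq_add]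
  exact Rw_le_rectCost Q0 Q1 _ (by omega) (by omega)

lemma Rw_concatSeq_le_Uw_add_Dw :
    Rw Q0 Q1 (concatSeq z0 N0 z1) (N0 + N1) ≤ Uw Q0 Q1 z0 N0 + Dw Q0 Q1 z1 N1 := by
  obtain ⟨k, hk, hU⟩ := exists_stepCost_eq_Uw Q0 Q1 z0 N0
  obtain ⟨j, hj, hD⟩ := exists_stepCost_eq_Uw Q1 Q0 z1 N1
  rw [Dw_eq_Uw_swap, hU, hD, ← rectCost_concatSeq_of_le_add Q0 Q1 z0 z1 N0 N1 hk]
  exact Rw_le_rectCost Q0 Q1 _ (by omega) (by omega)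

lemma min_le_Rw_concatSeq :
    min (min (Rw Q0 Q1 z0 N0 + Q0 * Sw z1 N1) (Q0 * Sw z0 N0 + Rw Q0 Q1 z1 N1))
        (Uw Q0 Q1 z0 N0 + Dw Q0 Q1 z1 N1) ≤ Rw Q0 Q1 (concatSeq z0 N0 z1) (N0 + N1) := by
  obtain ⟨k, m, hkm, hm, hR⟩ := exists_rectCost_eq_Rw Q0 Q1 (concatSeq z0 N0 z1) (N0 + N1)
  rw [hR]
  rcases le_total m N0 with hmN | hNm
  · rw [rectCost_concatSeq_of_le Q0 Q1 z0 z1 N0 N1 (hkm.trans hmN) hmN]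
    exact (min_le_left _ _).trans <| (min_le_left _ _).trans <|
      add_le_add_left (Rw_le_rectCost Q0 Q1 z0 hkm hmN) _
  obtain ⟨j, rfl⟩ := Nat.exists_eq_add_of_le hNm
  rcases le_total k N0 with hkN | hNk
  · rw [rectCost_concatSeq_of_le_add Q0 Q1 z0 z1 N0 N1 hkN, Dw_eq_Uw_swap]
    exact (min_le_right _ _).trans <|
      add_le_add (Uw_le_stepCost Q0 Q1 z0 hkN) (Uw_le_stepCost Q1 Q0 z1 (by omega))
  obtain ⟨i, rfl⟩ := Nat.exists_eq_add_of_le hNk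
  rw [rectCost_concatSeq_add]
  exact (min_le_left _ _).trans <| (min_le_right _ _).trans <|
    add_le_add_right (Rw_le_rectCost Q0 Q1 z1 (by omega) (by omega)) _

end Concat

theorem stmt9_general (Q0 Q1 : ℝ) (N0 N1 : ℕ)
    (z0 z1 : ℕ → ℝ) :
    Rw Q0 Q1 (concatSeq z0 N0 z1) (N0 + N1) =
      min (min (Rw Q0 Q1 z0 N0 + Q0 * Sw z1 N1) (Q0 * Sw z0 N0 + Rw Q0 Q1 z1 N1))
        (Uw Q0 Q1 z0 N0 + Dw Q0 Q1 z1 N1) :=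
  le_antisymm
    (le_min (le_min (Rw_concatSeq_le_Rw_add Q0 Q1 z0 z1 N0 N1)
      (Rw_concatSeq_le_add_Rw Q0 Q1 z0 z1 N0 N1)) (Rw_concatSeq_le_Uw_add_Dw Q0 Q1 z0 z1 N0 N1))
    (min_le_Rw_concatSeq Q0 Q1 z0 z1 N0 N1)

/-- the optimal rectangular loss of a concatenation satisfies
`R(z⁰ ++ z¹) = min( R(z⁰) + Q0 S(z¹), Q0 S(z⁰) + R(z¹), U(z⁰) + D(z¹) )`. -/
theorem stmt9 (Q0 Q1 : ℝ) (hQ : Q0 ≤ Q1) (N0 N1 : ℕ) (h0 : 1 ≤ N0) (h1 : 1 ≤ N1)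
    (z0 z1 : ℕ → ℝ) :
    Rw Q0 Q1 (concatSeq z0 N0 z1) (N0 + N1) =
      min (min (Rw Q0 Q1 z0 N0 + Q0 * Sw z1 N1) (Q0 * Sw z0 N0 + Rw Q0 Q1 z1 N1))
        (Uw Q0 Q1 z0 N0 + Dw Q0 Q1 z1 N1) :=
  stmt9_general Q0 Q1 N0 N1 z0 z1
end
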